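/- arXiv:2302.01544 — 4 statements merged into one kernel-verified Lean document; each statement's English description precedes it below -/
import Mathlib

section
/- Fix μ₁ > κ_a > 0 and α_a > 1 with μ_a := κ_a α_a/(α_a−1) ≤ μ₁. Let Θ_a = {(κ,α) ∈ (0,κ_a]×(0,∞) : μ(κ,α) > μ₁}, where μ(κ,α) = κα/(α−1) for α>1 and μ(κ,α)=+∞ for α ≤ 1. Then inf over (κ,α) ∈ Θ_a of [log(α_a/α) + α·log(κ_a/κ) + α/α_a − 1] equals log(α_a (μ₁−κ_a)/μ₁) + (1/α_a)·μ₁/(μ₁−κ_a) − 1. -/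
open Real Set

/-!
Write `KL(κ, α) = g(α) + α log (κ_a / κ)` with `g(α) = log (α_a / α) + α / α_a - 1`.
For `κ ≤ κ_a` the mean condition `μ(κ, α) > μ₁` says exactly `α < μ₁ / (μ₁ - κ)`, so every
`(κ, α) ∈ Θ_a` has `α < A := μ₁ / (μ₁ - κ_a)`, and `A ≤ α_a` is the hypothesis `μ_a ≤ μ₁`.
Since `g` decreases on `(0, α_a]` and the second term is nonnegative, `KL ≥ g(A)`; the bound is
approached along `κ = κ_a`, `α ↑ A`, and `g(A)` is the closed form.
-/

/-- `KL(Pa(κa, αa), Pa(κ, α))` for `κ ≤ κa`. -/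
noncomputable def paretoKL (κa αa κ α : ℝ) : ℝ :=
  log (αa / α) + α * log (κa / κ) + α / αa - 1

theorem paretoKL_same_scale (κ αa α : ℝ) :
    paretoKL κ αa κ α = log (αa / α) + α / αa - 1 := by
  rcases eq_or_ne κ 0 with rfl | hκ
  · simp [paretoKL]
  · simp [paretoKL, div_self hκ]

theorem paretoKL_same_scale_le {κa αa κ α : ℝ} (hκ : 0 < κ) (hκa : κ ≤ κa) (hα : 0 ≤ α) :
    paretoKL κa αa κa α ≤ paretoKL κa αa κ α := by
  have : 0 ≤ α * log (κa / κ) := mul_nonneg hα (log_nonneg ((one_le_div hκ).mpr hκa))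
  rw [paretoKL_same_scale]
  unfold paretoKL
  linarith

theorem antitoneOn_paretoKL_same_scale (κ αa : ℝ) :
    AntitoneOn (paretoKL κ αa κ) (Ioc 0 αa) := by
  intro α ⟨hα, _⟩ β ⟨hβ, hβa⟩ hαβ
  have hlog : 1 - (β / α)⁻¹ ≤ log (β / α) := one_sub_inv_le_log_of_pos (div_pos hβ hα)
  have hgap : (β - α) / αa ≤ 1 - (β / α)⁻¹ := by
    rw [inv_div, one_sub_div hβ.ne']
    exact div_le_div_of_nonneg_left (by linarith) hβ hβa
  have hαa : 0 < αa := hβ.trans_le hβa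
  rw [paretoKL_same_scale, paretoKL_same_scale, log_div hαa.ne' hβ.ne', log_div hαa.ne' hα.ne']
  rw [log_div hβ.ne' hα.ne'] at hlog
  have : β / αa - α / αa = (β - α) / αa := by ring
  linarith

theorem isGLB_paretoKL_same_scale_image_Ioo {κ αa A : ℝ} (hA : 0 < A) (hAαa : A ≤ αa) :
    IsGLB (paretoKL κ αa κ '' Ioo 0 A) (paretoKL κ αa κ A) := by
  have hcont : ContinuousAt (paretoKL κ αa κ) A := by
    rw [show paretoKL κ αa κ = fun α => log (αa / α) + α / αa - 1 from
      funext (paretoKL_same_scale κ αa)]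
    have : 0 < αa := hA.trans_le hAαa
    fun_prop (disch := positivity)
  exact (isLUB_Ioo hA).isGLB_of_tendsto
    ((antitoneOn_paretoKL_same_scale κ αa).mono
      (Ioo_subset_Ioc_self.trans (Ioc_subset_Ioc_right hAαa)))
    (nonempty_Ioo.mpr hA) (hcont.tendsto.mono_left nhdsWithin_le_nhds)

/-- The left side encodes `μ(κ, α) > μ₁`, with `μ(κ, α) = +∞` for `α ≤ 1`. -/
theorem pareto_mean_gt_iff {κ α μ₁ : ℝ} (hκ : 0 < κ) (hκμ : κ < μ₁) :
    (α ≤ 1 ∨ (1 < α ∧ μ₁ < κ * α / (α - 1))) ↔ α < μ₁ / (μ₁ - κ) := by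
  rw [lt_div_iff₀ (sub_pos.mpr hκμ)]
  constructor
  · rintro (hα1 | ⟨hα1, hmean⟩)
    · nlinarith
    · rw [lt_div_iff₀ (by linarith)] at hmean
      linarith
  · intro h
    rcases le_or_gt α 1 with hα1 | hα1
    · exact Or.inl hα1
    · refine Or.inr ⟨hα1, ?_⟩
      rw [lt_div_iff₀ (by linarith)]
      linarith

/-- Closed form of `KL_inf`: the infimum over
`Θ_a = {(κ, α) ∈ (0, κ_a] × (0, ∞) : μ(κ, α) > μ₁}` (where `μ(κ,α) = κα/(α-1)` for
`α > 1` and `μ(κ,α) = ∞` for `α ≤ 1`) of the KL divergence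
`log (α_a/α) + α log (κ_a/κ) + α/α_a - 1` equals
`log (α_a (μ₁ - κ_a)/μ₁) + (1/α_a)·μ₁/(μ₁ - κ_a) - 1`. -/
theorem KL_inf_closed_form (κa αa μ₁ : ℝ) (hκ : 0 < κa) (hκμ : κa < μ₁)
    (hα : 1 < αa) (hμ : κa * αa / (αa - 1) ≤ μ₁) :
    IsGLB
      ((fun p : ℝ × ℝ => Real.log (αa / p.2) + p.2 * Real.log (κa / p.1) + p.2 / αa - 1) ''
        {p : ℝ × ℝ | 0 < p.1 ∧ p.1 ≤ κa ∧ 0 < p.2 ∧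
          (p.2 ≤ 1 ∨ (1 < p.2 ∧ μ₁ < p.1 * p.2 / (p.2 - 1)))})
      (Real.log (αa * (μ₁ - κa) / μ₁) + (1 / αa) * (μ₁ / (μ₁ - κa)) - 1) := by
  set A := μ₁ / (μ₁ - κa)
  have hμκ : 0 < μ₁ - κa := sub_pos.mpr hκμ
  have hA : 0 < A := div_pos (hκ.trans hκμ) hμκ
  have hAαa : A ≤ αa := by
    rw [div_le_iff₀ (by linarith)] at hμ
    rw [div_le_iff₀ hμκ]
    linarith
  have hvalue : paretoKL κa αa κa A =
      log (αa * (μ₁ - κa) / μ₁) + (1 / αa) * (μ₁ / (μ₁ - κa)) - 1 := by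
    rw [paretoKL_same_scale, div_div_eq_mul_div]
    ring
  have hglb := isGLB_paretoKL_same_scale_image_Ioo (κ := κa) hA hAαa
  rw [← hvalue]
  constructor
  · rintro _ ⟨⟨κ, α⟩, ⟨hκ0, hκa, hα0, hmean⟩, rfl⟩
    rw [pareto_mean_gt_iff hκ0 (hκa.trans_lt hκμ)] at hmean
    have hαA : α < A :=
      hmean.trans_le (div_le_div_of_nonneg_left (hκ.trans hκμ).le hμκ (by linarith))
    calc paretoKL κa αa κa A ≤ paretoKL κa αa κa α := hglb.1 ⟨α, ⟨hα0, hαA⟩, rfl⟩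
      _ ≤ paretoKL κa αa κ α := paretoKL_same_scale_le hκ0 hκa hα0.le
  · refine fun b hb => hglb.2 ?_
    rintro _ ⟨α, ⟨hα0, hαA⟩, rfl⟩
    exact hb ⟨(κa, α), ⟨hκ, le_rfl, hα0, (pareto_mean_gt_iff hκ hκμ).mpr hαA⟩, rfl⟩
end

section
/- Let Z follow the chi-squared distribution with 2n degrees of freedom. Then for any x ∈ (0,1), P[Z ≤ 2nx] ≤ exp(−n·h(x)) where h(x) = x − 1 − log x ≥ 0. -/
open MeasureTheory ProbabilityTheory Real Set

/-!
Exponential tilting: the density of `Gamma(a, r)` is `(r/s)^a e^{(s-r)z}` times the density of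
`Gamma(a, s)`. For `s ≥ r` the factor `e^{(s-r)z}` is at most `e^{(s-r)c}` on `z ≤ c`, so
`P[Z ≤ c] ≤ (r/s)^a e^{(s-r)c}`. For `χ²_{2n} = Gamma(n, 1/2)` and `c = 2nx`, the optimal tilt
`s = 1/(2x)` turns this bound into `x^n e^{n(1-x)} = e^{-n h(x)}`.
-/

namespace ProbabilityTheory

lemma gammaPDFReal_eq_mul_gammaPDFReal {a r s : ℝ} (hr : 0 < r) (hs : 0 < s) (z : ℝ) :
    gammaPDFReal a r z = (r / s) ^ a * exp ((s - r) * z) * gammaPDFReal a s z := by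
  by_cases hz : 0 ≤ z
  · simp only [gammaPDFReal, if_pos hz]
    have hrs : (r / s) ^ a * s ^ a = r ^ a := by
      rw [div_rpow hr.le hs.le, div_mul_cancel₀ _ (rpow_pos_of_pos hs a).ne']
    have hexp : exp ((s - r) * z) * exp (-(s * z)) = exp (-(r * z)) := by
      rw [← exp_add]; ring_nf
    calc r ^ a / Gamma a * z ^ (a - 1) * exp (-(r * z))
        = (r / s) ^ a * s ^ a / Gamma a * z ^ (a - 1) * (exp ((s - r) * z) * exp (-(s * z))) := by
          rw [hrs, hexp]
      _ = _ := by ring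
  · simp [gammaPDFReal, if_neg hz]

lemma gammaPDF_le_mul_gammaPDF {a r s c z : ℝ} (ha : 0 < a) (hr : 0 < r) (hs : 0 < s)
    (hrs : r ≤ s) (hz : z ≤ c) :
    gammaPDF a r z ≤ ENNReal.ofReal ((r / s) ^ a * exp ((s - r) * c)) * gammaPDF a s z := by
  rw [gammaPDF, gammaPDF, ← ENNReal.ofReal_mul (by positivity),
    gammaPDFReal_eq_mul_gammaPDFReal hr hs]
  gcongr
  exact gammaPDFReal_nonneg ha hs z

theorem gammaMeasure_Iic_le {a r s : ℝ} (ha : 0 < a) (hr : 0 < r) (hrs : r ≤ s) (c : ℝ) :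
    gammaMeasure a r (Iic c) ≤ ENNReal.ofReal ((r / s) ^ a * exp ((s - r) * c)) := by
  have hs : 0 < s := hr.trans_le hrs
  have := isProbabilityMeasure_gammaMeasure ha hs
  have hmeas : Measurable (gammaPDF a s) := (measurable_gammaPDFReal a s).ennreal_ofReal
  calc gammaMeasure a r (Iic c)
      = ∫⁻ z in Iic c, gammaPDF a r z := withDensity_apply _ measurableSet_Iic
    _ ≤ ∫⁻ z in Iic c, ENNReal.ofReal ((r / s) ^ a * exp ((s - r) * c)) * gammaPDF a s z :=
        setLIntegral_mono (hmeas.const_mul _) fun _ hz ↦ gammaPDF_le_mul_gammaPDF ha hr hs hrs hz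
    _ = ENNReal.ofReal ((r / s) ^ a * exp ((s - r) * c)) * gammaMeasure a s (Iic c) := by
        rw [lintegral_const_mul _ hmeas, gammaMeasure,
          withDensity_apply _ measurableSet_Iic]
    _ ≤ ENNReal.ofReal ((r / s) ^ a * exp ((s - r) * c)) :=
        mul_le_of_le_one_right' prob_le_one

end ProbabilityTheory

/-- Chernoff bound for the lower tail of the chi-squared distribution with `2n`
degrees of freedom (= Gamma with shape `n` and rate `1/2`): for `x ∈ (0,1)`,
`P[Z ≤ 2nx] ≤ exp (-n h(x))` with `h(x) = x - 1 - log x ≥ 0`. -/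
theorem chisq_lower_tail (n : ℕ) (hn : 1 ≤ n) (x : ℝ) (hx0 : 0 < x) (hx1 : x < 1) :
    gammaMeasure n (1 / 2) (Set.Iic (2 * n * x))
        ≤ ENNReal.ofReal (Real.exp (-(n * (x - 1 - Real.log x)))) ∧
      0 ≤ x - 1 - Real.log x := by
  refine ⟨?_, by linarith [log_le_sub_one_of_pos hx0]⟩
  have htilt : (1 / 2 : ℝ) ≤ 1 / (2 * x) := by gcongr; linarith
  have hbound : ((1 / 2) / (1 / (2 * x))) ^ (n : ℝ) * exp ((1 / (2 * x) - 1 / 2) * (2 * n * x))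
      = exp (-(n * (x - 1 - log x))) := by
    rw [show (1 / 2) / (1 / (2 * x)) = x by field_simp, rpow_def_of_pos hx0, ← exp_add]
    congr 1
    field_simp
    ring
  rw [← hbound]
  exact gammaMeasure_Iic_le (by exact_mod_cast hn) (by norm_num) htilt _
end

section
/- The exponential distribution with rate α satisfies Bernstein's condition with parameter b = 1/α: for every integer k ≥ 3, the k-th central moment M_k of Exp(α) satisfies M_k ≤ (1/2)·k!·(1/α²)·(1/α)^{k−2}. -/
/-!
Binomial expansion of `(X - 1/α)^k` together with the moments `E[X^m] = m!/α^m` shows that the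
`k`-th central moment of `Exp(α)` is `!k/α^k`, where `!k = ∑ (-1)^m C(k,m) (k-m)!` is the number of
derangements. The recurrence `!(n+2) = (n+1)(!n + !(n+1))` gives `2·!k ≤ k!` for `k ≥ 1`.
-/

open MeasureTheory ProbabilityTheory Real Set Finset

theorem numDerangements_eq_sum_choose (n : ℕ) :
    (numDerangements n : ℤ) =
      ∑ m ∈ range (n + 1), (-1 : ℤ) ^ m * n.choose m * (n - m).factorial := by
  rw [numDerangements_sum]
  refine sum_congr rfl fun m hm => ?_
  have hmn : m ≤ n := mem_range_succ_iff.mp hm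
  rw [Nat.ascFactorial_eq_factorial_mul_choose, Nat.add_sub_cancel' hmn, Nat.choose_symm hmn]
  push_cast
  ring

theorem two_mul_numDerangements_le_factorial {n : ℕ} (hn : 1 ≤ n) :
    2 * numDerangements n ≤ n.factorial := by
  induction n using Nat.strong_induction_on with
  | _ n ih =>
    match n, hn with
    | 1, _ => decide
    | 2, _ => decide
    | n + 3, _ =>
      have h1 := ih (n + 1) (by omega) (by omega)
      have h2 := ih (n + 2) (by omega) (by omega)
      calc 2 * numDerangements (n + 3)
          = (n + 2) * (2 * numDerangements (n + 1) + 2 * numDerangements (n + 2)) := by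
            rw [numDerangements_add_two]; ring
        _ ≤ (n + 2) * ((n + 1).factorial + (n + 2).factorial) := by gcongr
        _ = (n + 3).factorial := by
            rw [Nat.factorial_succ (n + 2), Nat.factorial_succ (n + 1)]; ring

section ExpMeasure

variable {α : ℝ}

theorem integral_expMeasure_eq_setIntegral_Ioi (hα : 0 < α) (g : ℝ → ℝ) :
    ∫ x, g x ∂expMeasure α = ∫ x in Ioi 0, g x * (α * exp (-(α * x))) := by
  have hpdf : ∀ x, ((exponentialPDFReal α x).toNNReal : ℝ) = exponentialPDFReal α x :=
    fun x => coe_toNNReal _ (exponentialPDFReal_nonneg hα x)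
  have hpdf_eq : ∀ x, exponentialPDFReal α x = if 0 ≤ x then α * exp (-(α * x)) else 0 := by
    simp [exponentialPDFReal, gammaPDFReal]
  rw [show expMeasure α = volume.withDensity (fun x => (exponentialPDFReal α x).toNNReal) from rfl,
    integral_withDensity_eq_integral_smul (measurable_exponentialPDFReal α).real_toNNReal]
  simp only [NNReal.smul_def, hpdf, smul_eq_mul]
  rw [← integral_Ici_eq_integral_Ioi,
    ← setIntegral_eq_integral_of_forall_compl_eq_zero (s := Ici 0)
      fun x hx => by rw [hpdf_eq, if_neg (notMem_Ici.mp hx).not_ge, zero_mul]]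
  exact setIntegral_congr_fun measurableSet_Ici fun x hx => by
    rw [hpdf_eq, if_pos (mem_Ici.mp hx), mul_comm]

theorem integral_pow_mul_exp_neg_mul_Ioi (hα : 0 < α) (n : ℕ) :
    ∫ x in Ioi 0, x ^ n * exp (-(α * x)) = n.factorial / α ^ (n + 1) := by
  have h := integral_rpow_mul_exp_neg_mul_Ioi (a := n + 1) (by positivity) hα
  simp only [add_sub_cancel_right, rpow_natCast] at h
  norm_cast at h
  rw [h, Nat.cast_succ, Gamma_nat_eq_factorial, one_div_pow, one_div_mul_eq_div]

theorem integrableOn_pow_mul_exp_neg_mul_Ioi (hα : 0 < α) (n : ℕ) :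
    IntegrableOn (fun x => x ^ n * exp (-(α * x))) (Ioi 0) := by
  have h := integrableOn_rpow_mul_exp_neg_mul_rpow (p := 1) (s := n)
    (by linarith [n.cast_nonneg (α := ℝ)]) one_pos hα
  simpa only [rpow_natCast, rpow_one, neg_mul] using h

theorem integral_sub_inv_pow_expMeasure (hα : 0 < α) (n : ℕ) :
    ∫ x, (x - 1 / α) ^ n ∂expMeasure α = numDerangements n / α ^ n := by
  have hexpand : ∀ x, (x - 1 / α) ^ n * (α * exp (-(α * x))) = ∑ m ∈ range (n + 1),
      (-1 / α) ^ m * n.choose m * α * (x ^ (n - m) * exp (-(α * x))) := fun x => by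
    rw [sub_eq_neg_add, add_pow, sum_mul]
    exact sum_congr rfl fun m _ => by ring
  have hterm : ∀ m ∈ range (n + 1),
      (-1 / α) ^ m * n.choose m * α * ((n - m).factorial / α ^ (n - m + 1))
        = (-1) ^ m * n.choose m * (n - m).factorial / α ^ n := fun m hm => by
    have hsplit : α ^ n = α ^ m * α ^ (n - m) := by
      rw [← pow_add, Nat.add_sub_cancel' (mem_range_succ_iff.mp hm)]
    rw [hsplit, div_pow, pow_succ]
    field_simp
  rw [integral_expMeasure_eq_setIntegral_Ioi hα,
    integral_congr_ae (Filter.Eventually.of_forall hexpand),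
    integral_finsetSum _ fun m _ => (integrableOn_pow_mul_exp_neg_mul_Ioi hα _).const_mul _]
  simp_rw [integral_const_mul, integral_pow_mul_exp_neg_mul_Ioi hα]
  rw [sum_congr rfl hterm, ← sum_div]
  congr 1
  exact_mod_cast (numDerangements_eq_sum_choose n).symm

end ExpMeasure

/-- Bernstein's condition for the exponential distribution with rate `α`:
for every `k ≥ 3`, the `k`-th central moment satisfies
`M_k ≤ (1/2) k! (1/α²) (1/α)^(k-2)`. -/
theorem exp_bernstein_condition (α : ℝ) (hα : 0 < α) (k : ℕ) (hk : 3 ≤ k) :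
    ∫ x, (x - 1 / α) ^ k ∂(expMeasure α)
      ≤ (1 / 2) * (k.factorial : ℝ) * (1 / α ^ 2) * (1 / α) ^ (k - 2) := by
  have hder : 2 * (numDerangements k : ℝ) ≤ k.factorial := by
    exact_mod_cast two_mul_numDerangements_le_factorial (by omega)
  have hrhs : (1 / 2) * (k.factorial : ℝ) * (1 / α ^ 2) * (1 / α) ^ (k - 2)
      = k.factorial / 2 / α ^ k := by
    obtain ⟨j, rfl⟩ : ∃ j, k = j + 2 := ⟨k - 2, by omega⟩
    rw [Nat.add_sub_cancel, pow_add, one_div_pow]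
    field_simp
  rw [integral_sub_inv_pow_expMeasure hα, hrhs]
  gcongr
  linarith
end

section
/- The unique solution c* ≥ 1 of the equation aμ·c·log c + (μ − aμ)c = −aκ, where μ > κ > 0, a > 1, and (κ/μ)e^{1/a−1} ≤ e^{−1}, is given by c* = exp(W(−(κ/μ)e^{1/a−1}) + 1 − 1/a), where W is the principal branch of the Lambert W function; moreover c* ≥ 1. -/
open Real

/-!
Substituting `c = exp (v + 1 - 1/a)` turns `a μ c log c + (μ - a μ) c = -a κ` into
`v e^v = -(κ/μ) e^(1/a - 1)`, whose solutions `v ≥ -1` are unique because `t ↦ t e^t` is strictly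
increasing on `[-1, ∞)`. The root `c ≥ 1` corresponds to `v ≥ 1/a - 1`, which by the same
monotonicity amounts to `κ/μ ≤ 1 - 1/a`, i.e. `μ ≥ κa/(a-1)`.
-/

theorem strictMonoOn_mul_exp_Ici : StrictMonoOn (fun t : ℝ => t * exp t) (Set.Ici (-1)) := by
  apply strictMonoOn_of_deriv_pos (convex_Ici _)
  · fun_prop
  · intro x hx
    rw [interior_Ici, Set.mem_Ioi] at hx
    have hderiv : HasDerivAt (fun t => t * exp t) (1 * exp x + x * exp x) x :=
      (hasDerivAt_id x).mul (hasDerivAt_exp x)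
    rw [hderiv.deriv]
    nlinarith [exp_pos x]

theorem mul_log_add_eq_iff_mul_exp_eq {a μ : ℝ} (ha : a ≠ 0) (hμ : μ ≠ 0) (κ v : ℝ) :
    a * μ * exp (v + 1 - 1 / a) * log (exp (v + 1 - 1 / a)) + (μ - a * μ) * exp (v + 1 - 1 / a)
        = -(a * κ) ↔ v * exp v = -((κ / μ) * exp (1 / a - 1)) := by
  have hsplit : exp (v + 1 - 1 / a) = exp v * exp (1 - 1 / a) := by
    rw [← exp_add]; ring_nf
  have hinv : exp (1 / a - 1) = (exp (1 - 1 / a))⁻¹ := by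
    rw [← exp_neg]; ring_nf
  have hE : exp (1 - 1 / a) ≠ 0 := (exp_pos _).ne'
  rw [log_exp, hsplit, hinv]
  generalize exp (1 - 1 / a) = E at hE ⊢
  have hlhs : a * μ * (exp v * E) * (v + 1 - 1 / a) + (μ - a * μ) * (exp v * E)
      = a * (μ * E * (v * exp v)) := by
    field_simp
    ring
  rw [hlhs, ← mul_neg, mul_right_inj' ha]
  constructor <;> intro h
  · field_simp
    linear_combination h
  · field_simp at h
    linear_combination h

theorem lambert_solution_general (a μ κ w : ℝ) (hκ : 0 < κ) (ha : 1 < a)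
    (hμa : κ * a / (a - 1) ≤ μ)
    (hw : -1 ≤ w)
    (hW : w * Real.exp w = -((κ / μ) * Real.exp (1 / a - 1))) :
    a * μ * Real.exp (w + 1 - 1 / a) * Real.log (Real.exp (w + 1 - 1 / a)) +
        (μ - a * μ) * Real.exp (w + 1 - 1 / a) = -(a * κ) ∧
      1 ≤ Real.exp (w + 1 - 1 / a) ∧
      ∀ c : ℝ, 1 ≤ c → a * μ * c * Real.log c + (μ - a * μ) * c = -(a * κ) →
        c = Real.exp (w + 1 - 1 / a) := by
  have ha₁ : 0 < a - 1 := by linarith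
  have hμ : 0 < μ := (div_pos (mul_pos hκ (by linarith)) ha₁).trans_le hμa
  have hinv_a : 0 < 1 / a := by positivity
  have hsolves := mul_log_add_eq_iff_mul_exp_eq (by positivity : a ≠ 0) hμ.ne' κ
  have hw_ge : 1 / a - 1 ≤ w := by
    have hκμ : κ / μ ≤ 1 - 1 / a := by
      rw [div_le_iff₀ hμ]
      rw [div_le_iff₀ ha₁] at hμa
      field_simp
      linarith
    refine (strictMonoOn_mul_exp_Ici.le_iff_le (Set.mem_Ici.2 (by linarith)) hw).1 ?_
    rw [hW]
    nlinarith [exp_pos (1 / a - 1)]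
  refine ⟨(hsolves w).2 hW, one_le_exp (by linarith), fun c hc hceq => ?_⟩
  set v := log c + 1 / a - 1
  have hc_eq : c = exp (v + 1 - 1 / a) := by
    rw [show v + 1 - 1 / a = log c by ring, exp_log (by linarith)]
  rw [hc_eq] at hceq ⊢
  have hv : -1 ≤ v := by linarith [log_nonneg hc]
  rw [strictMonoOn_mul_exp_Ici.injOn hv hw (((hsolves v).1 hceq).trans hW.symm)]

/-- The unique solution `c* ≥ 1` of `aμ c log c + (μ - aμ) c = -aκ` is
`c* = exp (W + 1 - 1/a)`, where `W` is the value of the principal branch of the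
Lambert W function at `-(κ/μ) e^(1/a - 1)` (characterized by `w ≥ -1` and
`w e^w = -(κ/μ) e^(1/a - 1)`); moreover `c* ≥ 1`. -/
theorem lambert_solution (a μ κ w : ℝ) (hκ : 0 < κ) (hκμ : κ < μ) (ha : 1 < a)
    (hμa : κ * a / (a - 1) ≤ μ)
    (harg : (κ / μ) * Real.exp (1 / a - 1) ≤ Real.exp (-1))
    (hw : -1 ≤ w)
    (hW : w * Real.exp w = -((κ / μ) * Real.exp (1 / a - 1))) :
    a * μ * Real.exp (w + 1 - 1 / a) * Real.log (Real.exp (w + 1 - 1 / a)) +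
        (μ - a * μ) * Real.exp (w + 1 - 1 / a) = -(a * κ) ∧
      1 ≤ Real.exp (w + 1 - 1 / a) ∧
      ∀ c : ℝ, 1 ≤ c → a * μ * c * Real.log c + (μ - a * μ) * c = -(a * κ) →
        c = Real.exp (w + 1 - 1 / a) :=
  lambert_solution_general a μ κ w hκ ha hμa hw hW
end
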